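/- arXiv:0802.0069 — 4 statements merged into one kernel-verified Lean document; each statement's English description precedes it below -/
import Mathlib

section
/- For any two probability densities p₀ and q w.r.t. a σ-finite measure μ, any α, β > 0, and any n ∈ ℕ, the test set A = {x ∈ 𝒳ⁿ : α p₀ⁿ(x) < β qⁿ(x)} satisfies α P₀ⁿ(A) + β Qⁿ(Aᶜ) ≤ √(αβ) (∫√(p₀ q) dμ)ⁿ, where p₀ⁿ and qⁿ denote the n-fold product densities. -/
/-!
On `{α p₀ⁿ < β qⁿ}` one has `α p₀ⁿ ≤ √(α p₀ⁿ · β qⁿ)`, and on the complement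
`β qⁿ ≤ √(α p₀ⁿ · β qⁿ)`; integrating, the weighted error of the likelihood-ratio test is at most
`√(αβ) ∫ √(p₀ⁿ qⁿ)`. The Hellinger affinity of product densities factorizes, giving
`(∫ √(p₀ q))ⁿ`.
-/

open MeasureTheory Real

lemma Real.sqrt_mul_le_add {a b : ℝ} (ha : 0 ≤ a) (hb : 0 ≤ b) : √(a * b) ≤ a + b :=
  sqrt_le_iff.mpr ⟨by positivity, by nlinarith⟩

lemma Real.mul_le_sqrt_mul_mul_sqrt_mul_of_mul_le {α β a b : ℝ} (hα : 0 ≤ α) (hβ : 0 ≤ β)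
    (ha : 0 ≤ a) (h : α * a ≤ β * b) : α * a ≤ √(α * β) * √(a * b) := by
  have hαa : 0 ≤ α * a := mul_nonneg hα ha
  calc α * a ≤ √(α * a * (β * b)) := (le_sqrt hαa (by nlinarith)).mpr (by nlinarith)
    _ = √(α * β) * √(a * b) := by rw [← sqrt_mul (mul_nonneg hα hβ)]; ring_nf

section Testing

variable {Ω : Type*} [MeasurableSpace Ω] {ν : Measure Ω} {f g : Ω → ℝ}

lemma MeasureTheory.Integrable.sqrt_mul (hf : 0 ≤ f) (hg : 0 ≤ g) (hfi : Integrable f ν)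
    (hgi : Integrable g ν) : Integrable (fun x ↦ √(f x * g x)) ν := by
  refine (hfi.add hgi).mono' (hfi.aemeasurable.mul hgi.aemeasurable).sqrt.aestronglyMeasurable
    (ae_of_all _ fun x ↦ ?_)
  rw [norm_of_nonneg (sqrt_nonneg _)]
  exact sqrt_mul_le_add (hf x) (hg x)

theorem mul_setIntegral_lt_add_mul_setIntegral_compl_le (hf : 0 ≤ f) (hg : 0 ≤ g)
    (hfi : Integrable f ν) (hgi : Integrable g ν) {α β : ℝ} (hα : 0 ≤ α) (hβ : 0 ≤ β) :
    α * ∫ x in {x | α * f x < β * g x}, f x ∂ν + β * ∫ x in {x | α * f x < β * g x}ᶜ, g x ∂ν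
      ≤ √(α * β) * ∫ x, √(f x * g x) ∂ν := by
  set A := {x | α * f x < β * g x}
  have hA : NullMeasurableSet A ν :=
    nullMeasurableSet_lt (hfi.const_mul α).aemeasurable (hgi.const_mul β).aemeasurable
  have hfg := (hfi.sqrt_mul hf hg hgi).const_mul √(α * β)
  have h_on : α * ∫ x in A, f x ∂ν ≤ √(α * β) * ∫ x in A, √(f x * g x) ∂ν := by
    rw [← integral_const_mul, ← integral_const_mul]
    exact setIntegral_mono_on_ae₀ (hfi.const_mul α).integrableOn hfg.integrableOn hA
      (ae_of_all _ fun x hx ↦ mul_le_sqrt_mul_mul_sqrt_mul_of_mul_le hα hβ (hf x) (le_of_lt hx))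
  have h_off : β * ∫ x in Aᶜ, g x ∂ν ≤ √(α * β) * ∫ x in Aᶜ, √(f x * g x) ∂ν := by
    rw [← integral_const_mul, ← integral_const_mul]
    refine setIntegral_mono_on_ae₀ (hgi.const_mul β).integrableOn hfg.integrableOn hA.compl
      (ae_of_all _ fun x hx ↦ ?_)
    rw [mul_comm α, mul_comm (f x)]
    exact mul_le_sqrt_mul_mul_sqrt_mul_of_mul_le hβ hα (hg x) (not_lt.mp hx)
  calc _ ≤ √(α * β) * ((∫ x in A, √(f x * g x) ∂ν) + ∫ x in Aᶜ, √(f x * g x) ∂ν) := by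
        rw [mul_add]; exact add_le_add h_on h_off
    _ = _ := by rw [integral_add_compl₀ hA (hfi.sqrt_mul hf hg hgi)]

end Testing

theorem MeasureTheory.integral_sqrt_prod_mul_prod_eq_pow {ι X : Type*} [Fintype ι]
    [MeasurableSpace X] {μ : Measure X} [SigmaFinite μ] {p q : X → ℝ} (hp : 0 ≤ p) (hq : 0 ≤ q) :
    ∫ x, √((∏ i, p (x i)) * ∏ i, q (x i)) ∂(Measure.pi fun _ : ι ↦ μ)
      = (∫ x, √(p x * q x) ∂μ) ^ Fintype.card ι := by
  simp_rw [← Finset.prod_mul_distrib]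
  rw [← integral_fintype_prod_eq_pow]
  congr with x
  exact sqrt_prod _ fun i _ ↦ mul_nonneg (hp _) (hq _)

theorem stmt1_general {X : Type*} [MeasurableSpace X] (μ : Measure X) [SigmaFinite μ]
    (p0 q : X → ℝ) (hp0 : ∀ x, 0 ≤ p0 x) (hq : ∀ x, 0 ≤ q x)
    (hp0i : Integrable p0 μ) (hqi : Integrable q μ)
    (α β : ℝ) (hα : 0 < α) (hβ : 0 < β) (n : ℕ) :
    α * (∫ x in {x : Fin n → X | α * ∏ i, p0 (x i) < β * ∏ i, q (x i)},
          ∏ i, p0 (x i) ∂(Measure.pi fun _ : Fin n => μ))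
    + β * (∫ x in {x : Fin n → X | α * ∏ i, p0 (x i) < β * ∏ i, q (x i)}ᶜ,
          ∏ i, q (x i) ∂(Measure.pi fun _ : Fin n => μ))
    ≤ Real.sqrt (α * β) * (∫ x, Real.sqrt (p0 x * q x) ∂μ)^n := by
  have h := mul_setIntegral_lt_add_mul_setIntegral_compl_le
    (fun x ↦ Finset.prod_nonneg fun i _ ↦ hp0 (x i)) (fun x ↦ Finset.prod_nonneg fun i _ ↦ hq (x i))
    (Integrable.fintype_prod fun _ : Fin n ↦ hp0i) (Integrable.fintype_prod fun _ : Fin n ↦ hqi)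
    hα.le hβ.le
  rwa [integral_sqrt_prod_mul_prod_eq_pow hp0 hq, Fintype.card_fin] at h

/-- Le Cam's testing bound: for the likelihood-ratio test set `A = {α p₀ⁿ < β qⁿ}`,
`α P₀ⁿ(A) + β Qⁿ(Aᶜ) ≤ √(αβ) ρ(p₀,q)ⁿ`. -/
theorem stmt1 {X : Type*} [MeasurableSpace X] (μ : Measure X) [SigmaFinite μ]
    (p0 q : X → ℝ) (hp0 : ∀ x, 0 ≤ p0 x) (hq : ∀ x, 0 ≤ q x)
    (hp0m : Measurable p0) (hqm : Measurable q)
    (hp0i : Integrable p0 μ) (hqi : Integrable q μ)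
    (hp01 : ∫ x, p0 x ∂μ = 1) (hq1 : ∫ x, q x ∂μ = 1)
    (α β : ℝ) (hα : 0 < α) (hβ : 0 < β) (n : ℕ) :
    α * (∫ x in {x : Fin n → X | α * ∏ i, p0 (x i) < β * ∏ i, q (x i)},
          ∏ i, p0 (x i) ∂(Measure.pi fun _ : Fin n => μ))
    + β * (∫ x in {x : Fin n → X | α * ∏ i, p0 (x i) < β * ∏ i, q (x i)}ᶜ,
          ∏ i, q (x i) ∂(Measure.pi fun _ : Fin n => μ))
    ≤ Real.sqrt (α * β) * (∫ x, Real.sqrt (p0 x * q x) ∂μ)^n :=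
  stmt1_general μ p0 q hp0 hq hp0i hqi α β hα hβ n
end

section
/- Let (𝒫, d) be a metric space of probability densities and P₀ a density with d(P₀, 𝒫) ≥ 3ε, and suppose that for each Q' in a maximal 2ε-separated subset 𝒫' of 𝒫 there exists a test ω_{Q'} with P₀ⁿ ω_{Q'} ≤ √(β/α) e^{-2nε²} and sup over Q in the 2ε-ball around Q' of Qⁿ(1-ω_{Q'}) ≤ √(α/β) e^{-2nε²}. Then ϕ = max over Q' ∈ 𝒫' of ω_{Q'} satisfies P₀ⁿ ϕ ≤ √(β/α) N(2ε, 𝒫, d) e^{-2nε²} and sup_{Q ∈ 𝒫} Qⁿ(1-ϕ) ≤ √(α/β) e^{-2nε²}. -/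
open MeasureTheory Real

/-- Combining tests over a maximal `2ε`-separated set: the maximum test has size
bounded by the covering number times `e^{-2nε²}` and uniform power `e^{-2nε²}`. -/
theorem stmt6 {𝒬 Ω : Type*} [MetricSpace 𝒬] [MeasurableSpace Ω]
    (P0n : Measure Ω) [IsProbabilityMeasure P0n]
    (Pn : 𝒬 → Measure Ω) (hPn : ∀ Q, IsProbabilityMeasure (Pn Q))
    (Θ : Set 𝒬) (p0 : 𝒬) (ε : ℝ) (hε : 0 < ε) (n : ℕ)
    (α β : ℝ) (hα : 0 < α) (hβ : 0 < β)
    (hfar : ∀ Q ∈ Θ, 3 * ε ≤ dist p0 Q)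
    (S : Finset 𝒬) (hS : S.Nonempty)
    (hmax : ∀ Q ∈ Θ, ∃ Q' ∈ S, dist Q Q' ≤ 2 * ε)
    (ω : 𝒬 → Ω → ℝ)
    (hω01 : ∀ Q' x, ω Q' x ∈ Set.Icc (0 : ℝ) 1)
    (hωmeas : ∀ Q', Measurable (ω Q'))
    (hsize : ∀ Q' ∈ S, ∫ x, ω Q' x ∂P0n ≤ Real.sqrt (β / α) * Real.exp (-2 * n * ε^2))
    (hpower : ∀ Q' ∈ S, ∀ Q ∈ Θ, dist Q Q' ≤ 2 * ε →
      ∫ x, (1 - ω Q' x) ∂(Pn Q) ≤ Real.sqrt (α / β) * Real.exp (-2 * n * ε^2)) :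
    (∫ x, (S.sup' hS fun Q' => ω Q' x) ∂P0n
        ≤ Real.sqrt (β / α) * S.card * Real.exp (-2 * n * ε^2)) ∧
    ∀ Q ∈ Θ, ∫ x, (1 - S.sup' hS fun Q' => ω Q' x) ∂(Pn Q)
        ≤ Real.sqrt (α / β) * Real.exp (-2 * n * ε^2) := by
  have hsupmeas : Measurable (fun x => S.sup' hS fun Q' => ω Q' x) :=
by
    have h := Finset.measurable_sup' hS fun Q' (_ : Q' ∈ S) => hωmeas Q'
    have heq : (S.sup' hS ω) = fun x => S.sup' hS fun Q' => ω Q' x := by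
      funext x; exact Finset.sup'_apply hS ω x
    rwa [heq] at h
  have hint : ∀ (μ : Measure Ω) [IsProbabilityMeasure μ] (Q' : 𝒬),
      Integrable (ω Q') μ := by
    intro μ _ Q'
    refine (integrable_const (1:ℝ)).mono' (hωmeas Q').aestronglyMeasurable ?_
    exact ae_of_all _ fun x => by
      have := hω01 Q' x; rw [Real.norm_eq_abs, abs_le]; constructor <;> linarith [this.1, this.2]
  have hintsup : ∀ (μ : Measure Ω) [IsProbabilityMeasure μ],
      Integrable (fun x => S.sup' hS fun Q' => ω Q' x) μ := by
    intro μ _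
    refine (integrable_const (1:ℝ)).mono' hsupmeas.aestronglyMeasurable ?_
    refine ae_of_all _ fun x => ?_
    rw [Real.norm_eq_abs, abs_le]
    obtain ⟨Q0, hQ0⟩ := hS
    constructor
    · exact le_trans (by linarith [(hω01 Q0 x).1] : (-1:ℝ) ≤ ω Q0 x)
        (Finset.le_sup' (fun Q' => ω Q' x) hQ0)
    · exact Finset.sup'_le _ _ fun Q' _ => (hω01 Q' x).2
  constructor
  · have h1 : ∫ x, (S.sup' hS fun Q' => ω Q' x) ∂P0n
        ≤ ∫ x, (∑ Q' ∈ S, ω Q' x) ∂P0n := by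
      refine integral_mono (hintsup P0n) (integrable_finset_sum _ fun Q' _ => hint P0n Q') ?_
      intro x
      refine Finset.sup'_le _ _ fun Q' hQ' => ?_
      exact Finset.single_le_sum (fun q _ => (hω01 q x).1) hQ'
    rw [integral_finset_sum _ fun Q' _ => hint P0n Q'] at h1
    refine h1.trans ?_
    calc ∑ Q' ∈ S, ∫ x, ω Q' x ∂P0n
        ≤ ∑ Q' ∈ S, Real.sqrt (β / α) * Real.exp (-2 * n * ε^2) :=
          Finset.sum_le_sum fun Q' hQ' => hsize Q' hQ'
      _ = Real.sqrt (β / α) * S.card * Real.exp (-2 * n * ε^2) := by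
          rw [Finset.sum_const, nsmul_eq_mul]; ring
  · intro Q hQ
    obtain ⟨Q', hQ'S, hd⟩ := hmax Q hQ
    have := hPn Q
    have h1 : ∫ x, (1 - S.sup' hS fun Q'' => ω Q'' x) ∂(Pn Q)
        ≤ ∫ x, (1 - ω Q' x) ∂(Pn Q) := by
      refine integral_mono ((integrable_const (1:ℝ)).sub (hintsup (Pn Q)))
        ((integrable_const (1:ℝ)).sub (hint (Pn Q) Q')) ?_
      intro x
      have : ω Q' x ≤ S.sup' hS fun Q'' => ω Q'' x := Finset.le_sup' (fun Q'' => ω Q'' x) hQ'S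
      dsimp only
      linarith
    exact h1.trans (hpower Q' hQ'S Q hQ hd)
end

section
/- Suppose for each j ∈ ℕ there is a test ϕ_j with P₀ⁿ ϕ_j ≤ √(β/α) N e^{-n j² ε²/9} and sup over p in the shell {p : jε < d(p,p₀) ≤ (j+1)ε} of Pⁿ(1 - ϕ_j) ≤ √(α/β) e^{-n j² ε²/9}. Then ϕ = sup_j ϕ_j satisfies P₀ⁿ ϕ ≤ √(β/α) N e^{-nε²/9}/(1 - e^{-nε²/9}), and for every i ∈ ℕ, sup over p with d(p,p₀) > iε of Pⁿ(1-ϕ) ≤ √(α/β) e^{-n ε² i²/9}. -/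
open MeasureTheory Real

/-- Combining shell tests: the supremum test `ϕ = sup_j ϕ_j` has size
`≤ √(β/α) N e^{-nε²/9}/(1-e^{-nε²/9})` and power `e^{-nε²i²/9}` outside radius `iε`. -/
theorem stmt7 {𝒬 Ω : Type*} [MetricSpace 𝒬] [MeasurableSpace Ω]
    (P0n : Measure Ω) [IsProbabilityMeasure P0n]
    (Pn : 𝒬 → Measure Ω) (hPn : ∀ p, IsProbabilityMeasure (Pn p))
    (p0 : 𝒬) (ε : ℝ) (hε : 0 < ε) (n : ℕ) (hn : 0 < n)
    (α β N : ℝ) (hα : 0 < α) (hβ : 0 < β) (hN : 1 ≤ N)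
    (ϕ : ℕ+ → Ω → ℝ)
    (hϕ01 : ∀ j x, ϕ j x ∈ Set.Icc (0 : ℝ) 1)
    (hϕmeas : ∀ j, Measurable (ϕ j))
    (hsize : ∀ j : ℕ+,
      ∫ x, ϕ j x ∂P0n ≤ Real.sqrt (β / α) * N * Real.exp (-n * (j : ℝ)^2 * ε^2 / 9))
    (hpower : ∀ j : ℕ+, ∀ p : 𝒬,
      (j : ℝ) * ε < dist p p0 → dist p p0 ≤ ((j : ℝ) + 1) * ε →
      ∫ x, (1 - ϕ j x) ∂(Pn p) ≤ Real.sqrt (α / β) * Real.exp (-n * (j : ℝ)^2 * ε^2 / 9)) :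
    (∫ x, (⨆ j : ℕ+, ϕ j x) ∂P0n
        ≤ Real.sqrt (β / α) * N * Real.exp (-n * ε^2 / 9)
            / (1 - Real.exp (-n * ε^2 / 9))) ∧
    ∀ i : ℕ+, ∀ p : 𝒬, (i : ℝ) * ε < dist p p0 →
      ∫ x, (1 - ⨆ j : ℕ+, ϕ j x) ∂(Pn p)
        ≤ Real.sqrt (α / β) * Real.exp (-n * ε^2 * (i : ℝ)^2 / 9) := by
  have hn1 : (1 : ℝ) ≤ n := by exact_mod_cast hn
  set r : ℝ := Real.exp (-n * ε ^ 2 / 9) with hrdef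
  have hr0 : 0 < r := Real.exp_pos _
  have hr1 : r < 1 := by
    apply Real.exp_lt_one_iff.mpr; nlinarith [sq_nonneg ε]
  set C : ℝ := Real.sqrt (β / α) * N with hCdef
  have hC0 : 0 < C := by
    apply mul_pos _ (lt_of_lt_of_le one_pos hN)
    exact Real.sqrt_pos.mpr (div_pos hβ hα)
  -- pointwise facts about the sup
  have hbdd : ∀ x, BddAbove (Set.range fun j : ℕ+ => ϕ j x) := by
    intro x
    refine ⟨1, ?_⟩
    rintro _ ⟨j, rfl⟩
    exact (hϕ01 j x).2
  have hg_le1 : ∀ x, (⨆ j : ℕ+, ϕ j x) ≤ 1 := fun x => ciSup_le fun j => (hϕ01 j x).2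
  have hg_nonneg : ∀ x, 0 ≤ ⨆ j : ℕ+, ϕ j x := fun x =>
    le_trans (hϕ01 1 x).1 (le_ciSup (hbdd x) 1)
  have hgmeas : Measurable fun x => ⨆ j : ℕ+, ϕ j x := Measurable.iSup hϕmeas
  have hgint : ∀ (μ : Measure Ω) [IsProbabilityMeasure μ],
      Integrable (fun x => ⨆ j : ℕ+, ϕ j x) μ := by
    intro μ _
    refine (integrable_const (1 : ℝ)).mono' hgmeas.aestronglyMeasurable ?_
    filter_upwards with x
    rw [Real.norm_eq_abs, abs_of_nonneg (hg_nonneg x)]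
    exact hg_le1 x
  have hϕint : ∀ (j : ℕ+) (μ : Measure Ω) [IsProbabilityMeasure μ],
      Integrable (ϕ j) μ := by
    intro j μ _
    refine (integrable_const (1 : ℝ)).mono' (hϕmeas j).aestronglyMeasurable ?_
    filter_upwards with x
    rw [Real.norm_eq_abs, abs_of_nonneg (hϕ01 j x).1]
    exact (hϕ01 j x).2
  constructor
  · -- size bound
    have hofReal : ∀ x, ENNReal.ofReal (⨆ j : ℕ+, ϕ j x)
        = ⨆ j : ℕ+, ENNReal.ofReal (ϕ j x) := by
      intro x
      exact Monotone.map_ciSup_of_continuousAt ENNReal.continuous_ofReal.continuousAt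
        (fun a b h => ENNReal.ofReal_le_ofReal h) (hbdd x)
    have key : ∫ x, (⨆ j : ℕ+, ϕ j x) ∂P0n
        = (∫⁻ x, ENNReal.ofReal (⨆ j : ℕ+, ϕ j x) ∂P0n).toReal :=
      integral_eq_lintegral_of_nonneg_ae (Filter.Eventually.of_forall hg_nonneg)
        hgmeas.aestronglyMeasurable
    set R : ENNReal := ENNReal.ofReal r with hRdef
    have hR1 : R < 1 := by
      rw [hRdef, ← ENNReal.ofReal_one]
      exact ENNReal.ofReal_lt_ofReal_iff one_pos |>.mpr hr1
    set S : ENNReal := ∑' j : ℕ+, ENNReal.ofReal (C * r ^ (j : ℕ)) with hSdef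
    have hL : ∫⁻ x, ENNReal.ofReal (⨆ j : ℕ+, ϕ j x) ∂P0n ≤ S := by
      have h1 : ∫⁻ x, ENNReal.ofReal (⨆ j : ℕ+, ϕ j x) ∂P0n
          ≤ ∑' j : ℕ+, ∫⁻ x, ENNReal.ofReal (ϕ j x) ∂P0n := by
        rw [← lintegral_tsum (fun j => ((hϕmeas j).ennreal_ofReal).aemeasurable)]
        apply lintegral_mono
        intro x
        dsimp only
        rw [hofReal x]
        exact iSup_le fun j => ENNReal.le_tsum j
      refine h1.trans (ENNReal.tsum_le_tsum fun j => ?_)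
      have heq : ∫⁻ x, ENNReal.ofReal (ϕ j x) ∂P0n
          = ENNReal.ofReal (∫ x, ϕ j x ∂P0n) :=
        (ofReal_integral_eq_lintegral_ofReal (hϕint j P0n)
          (Filter.Eventually.of_forall fun x => (hϕ01 j x).1)).symm
      rw [heq]
      apply ENNReal.ofReal_le_ofReal
      refine (hsize j).trans (mul_le_mul_of_nonneg_left ?_ hC0.le)
      rw [hrdef, ← Real.exp_nat_mul]
      apply Real.exp_le_exp.mpr
      have hjn : (1 : ℝ) ≤ ((j : ℕ) : ℝ) := by exact_mod_cast j.one_le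
      have hj2 : ((j : ℕ) : ℝ) ≤ ((j : ℕ) : ℝ) ^ 2 := by nlinarith
      have hne : (0 : ℝ) ≤ (n : ℝ) * ε ^ 2 :=
        mul_nonneg (le_trans zero_le_one hn1) (sq_nonneg ε)
      nlinarith [mul_le_mul_of_nonneg_right hj2 hne]
    have hSval : S = ENNReal.ofReal C * (R * (1 - R)⁻¹) := by
      rw [hSdef]
      have hterm : ∀ j : ℕ+, ENNReal.ofReal (C * r ^ (j : ℕ))
          = ENNReal.ofReal C * R ^ (j : ℕ) := by
        intro j
        rw [ENNReal.ofReal_mul hC0.le, ENNReal.ofReal_pow hr0.le]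
      simp_rw [hterm]
      rw [ENNReal.tsum_mul_left]
      congr 1
      have hEq := (Equiv.pnatEquivNat.symm).tsum_eq (fun j : ℕ+ => R ^ (j : ℕ))
      rw [← hEq]
      have hcoe : ∀ m : ℕ, ((Equiv.pnatEquivNat.symm m : ℕ+) : ℕ) = m + 1 := fun m => rfl
      simp_rw [hcoe, pow_succ]
      rw [ENNReal.tsum_mul_right, ENNReal.tsum_geometric]
      ring
    have hSne : S ≠ ⊤ := by
      rw [hSval]
      have h1R : (0 : ENNReal) < 1 - R := tsub_pos_of_lt hR1
      have hinv : (1 - R)⁻¹ ≠ ⊤ := ENNReal.inv_ne_top.mpr h1R.ne'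
      exact ENNReal.mul_ne_top ENNReal.ofReal_ne_top
        (ENNReal.mul_ne_top (by simp [hRdef]) hinv)
    have hfinal : (∫⁻ x, ENNReal.ofReal (⨆ j : ℕ+, ϕ j x) ∂P0n).toReal ≤ S.toReal :=
      ENNReal.toReal_mono hSne hL
    rw [key]
    refine hfinal.trans_eq ?_
    rw [hSval]
    have hR1' : R ≤ 1 := hR1.le
    rw [ENNReal.toReal_mul, ENNReal.toReal_mul, ENNReal.toReal_inv,
      ENNReal.toReal_sub_of_le hR1' ENNReal.one_ne_top]
    simp only [ENNReal.toReal_ofReal hC0.le, ENNReal.toReal_ofReal hr0.le,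
      ENNReal.toReal_one, hRdef]
    rw [div_eq_mul_inv]
    ring
  · -- power bound
    intro i p hip
    haveI := hPn p
    set d := dist p p0 with hddef
    have hi1 : (1 : ℝ) ≤ (i : ℝ) := by exact_mod_cast i.one_le
    have hd0 : 0 < d := lt_of_le_of_lt (by positivity) hip
    have hdiv0 : 0 ≤ d / ε := by positivity
    set m : ℕ := ⌈d / ε⌉₊ with hmdef
    have him : (i : ℕ) < m := by
      rw [hmdef]
      apply Nat.lt_ceil.mpr
      rw [lt_div_iff₀ hε]
      exact_mod_cast hip
    have hm1 : 1 ≤ m := le_trans i.one_le him.le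
    have hm2 : 2 ≤ m := by have hip1 := i.pos; omega
    set j : ℕ+ := ⟨m - 1, by omega⟩ with hjdef
    have hjc : ((j : ℕ) : ℝ) = (m : ℝ) - 1 := by
      have : (j : ℕ) = m - 1 := rfl
      rw [this, Nat.cast_sub hm1, Nat.cast_one]
    have hlow : (j : ℝ) * ε < d := by
      have h := Nat.ceil_lt_add_one hdiv0
      rw [← hmdef] at h
      have : (j : ℝ) < d / ε := by rw [hjc]; linarith
      calc (j : ℝ) * ε < (d / ε) * ε := by exact mul_lt_mul_of_pos_right this hε
        _ = d := by field_simp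
    have hhigh : d ≤ ((j : ℝ) + 1) * ε := by
      have h := Nat.le_ceil (d / ε)
      rw [← hmdef] at h
      have : d / ε ≤ (j : ℝ) + 1 := by rw [hjc]; linarith
      calc d = (d / ε) * ε := by field_simp
        _ ≤ ((j : ℝ) + 1) * ε := mul_le_mul_of_nonneg_right this hε.le
    have hij : (i : ℝ) ≤ (j : ℝ) := by
      rw [hjc]
      have : ((i : ℕ) : ℝ) + 1 ≤ (m : ℝ) := by exact_mod_cast him
      push_cast at this ⊢
      linarith
    have hmono : ∫ x, (1 - ⨆ j' : ℕ+, ϕ j' x) ∂(Pn p) ≤ ∫ x, (1 - ϕ j x) ∂(Pn p) := by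
      apply integral_mono ((integrable_const (1:ℝ)).sub (hgint (Pn p)))
        ((integrable_const (1:ℝ)).sub (hϕint j (Pn p)))
      intro x
      exact sub_le_sub_left (le_ciSup (hbdd x) j) 1
    refine hmono.trans ((hpower j p hlow hhigh).trans ?_)
    apply mul_le_mul_of_nonneg_left _ (Real.sqrt_nonneg _)
    apply Real.exp_le_exp.mpr
    have h0n : (0 : ℝ) ≤ (n : ℝ) * ε ^ 2 := by positivity
    have hsq : (i : ℝ) ^ 2 ≤ (j : ℝ) ^ 2 := by nlinarith
    nlinarith [mul_le_mul_of_nonneg_right hsq h0n]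
end

section
/- Let p and p₀ be probability densities on a measurable space with p₀/p ≤ e^{D} pointwise (i.e., log(p₀/p) ≤ D everywhere). Then there exists a constant B depending only on D such that P₀ log(p₀/p) ≤ B² h²(p,p₀) and P₀ (log(p₀/p))² ≤ B² h²(p,p₀), where h is the Hellinger distance. -/
open MeasureTheory Real

private lemma aux_nonneg (a : ℝ) (ha : 0 ≤ a) : 0 ≤ a * Real.log a - a + 1 := by
  rcases ha.eq_or_lt with h | h
  · simp [← h]
  · have h1 : Real.log a⁻¹ ≤ a⁻¹ - 1 := Real.log_le_sub_one_of_pos (by positivity)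
    rw [Real.log_inv] at h1
    have h2 : a * (1 - a⁻¹) ≤ a * Real.log a :=
      mul_le_mul_of_nonneg_left (by linarith) h.le
    have h3 : a * (1 - a⁻¹) = a - 1 := by field_simp
    linarith

private lemma aux_kl (M a : ℝ) (hM : 1 ≤ M) (ha : 0 ≤ a) (haM : a ≤ M ^ 2) :
    a * Real.log a - a + 1 ≤ 4 * M ^ 2 * (Real.sqrt a - 1) ^ 2 := by
  rcases ha.eq_or_lt with h | h
  · rw [← h]; simp; nlinarith
  · set s := Real.sqrt a with hs_def
    have hs : 0 < s := Real.sqrt_pos.mpr h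
    have hsa : s ^ 2 = a := Real.sq_sqrt ha
    have hsM : s ≤ M := by
      have h1 : Real.sqrt a ≤ Real.sqrt (M ^ 2) := Real.sqrt_le_sqrt haM
      rwa [Real.sqrt_sq (by linarith)] at h1
    have hlog : Real.log a = 2 * Real.log s := by
      rw [← hsa, Real.log_pow]; push_cast; ring
    have hls : Real.log s ≤ s - 1 := Real.log_le_sub_one_of_pos hs
    have h2 : a * Real.log a ≤ a * (2 * (s - 1)) :=
      mul_le_mul_of_nonneg_left (by rw [hlog]; linarith) ha
    have h4 : 0 ≤ 4 * M ^ 2 - 2 * s - 1 := by nlinarith [sq_nonneg (M - 1)]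
    nlinarith [mul_nonneg (sq_nonneg (s - 1)) h4]

private lemma aux_sq (M a : ℝ) (hM : 1 ≤ M) (ha : 0 ≤ a) (haM : a ≤ M ^ 2) :
    a * (Real.log a) ^ 2 ≤ 4 * M ^ 2 * (Real.sqrt a - 1) ^ 2 := by
  rcases ha.eq_or_lt with h | h
  · rw [← h]; simp; positivity
  · set s := Real.sqrt a with hs_def
    have hs : 0 < s := Real.sqrt_pos.mpr h
    have hsa : s ^ 2 = a := Real.sq_sqrt ha
    have hsM : s ≤ M := by
      have h1 : Real.sqrt a ≤ Real.sqrt (M ^ 2) := Real.sqrt_le_sqrt haM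
      rwa [Real.sqrt_sq (by linarith)] at h1
    have hlog : Real.log a = 2 * Real.log s := by
      rw [← hsa, Real.log_pow]; push_cast; ring
    have key : |s * Real.log s| ≤ M * |s - 1| := by
      rcases le_or_gt 1 s with h1 | h1
      · have hl0 : 0 ≤ Real.log s := Real.log_nonneg h1
        have hls : Real.log s ≤ s - 1 := Real.log_le_sub_one_of_pos hs
        rw [abs_of_nonneg (by positivity), abs_of_nonneg (by linarith)]
        nlinarith
      · have hls : Real.log s⁻¹ ≤ s⁻¹ - 1 := Real.log_le_sub_one_of_pos (by positivity)
        rw [Real.log_inv] at hls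
        have hneg : Real.log s < 0 := Real.log_neg hs h1
        have h2 : s * (-Real.log s) ≤ s * (s⁻¹ - 1) :=
          mul_le_mul_of_nonneg_left (by linarith) hs.le
        have h3 : s * (s⁻¹ - 1) = 1 - s := by field_simp
        rw [abs_of_nonpos (by nlinarith), abs_of_neg (by linarith)]
        nlinarith
    have k2 : (s * Real.log s) ^ 2 ≤ (M * |s - 1|) ^ 2 := by
      have h5 := pow_le_pow_left₀ (abs_nonneg (s * Real.log s)) key 2
      rwa [sq_abs] at h5
    calc a * (Real.log a) ^ 2 = 4 * (s * Real.log s) ^ 2 := by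
          rw [hlog, ← hsa]; ring
      _ ≤ 4 * (M * |s - 1|) ^ 2 := by linarith
      _ = 4 * M ^ 2 * (s - 1) ^ 2 := by rw [mul_pow, sq_abs]; ring

/-- Pointwise bounds at the level of density values. -/
private lemma pointwise_bounds (D px p0x : ℝ) (hD : 0 ≤ D) (hp : 0 ≤ px) (hp0 : 0 ≤ p0x)
    (hr : p0x ≤ Real.exp D * px) :
    0 ≤ Real.log (p0x / px) * p0x - p0x + px ∧
    Real.log (p0x / px) * p0x - p0x + px
        ≤ 4 * Real.exp D * (Real.sqrt px - Real.sqrt p0x) ^ 2 ∧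
    (Real.log (p0x / px)) ^ 2 * p0x
        ≤ 4 * Real.exp D * (Real.sqrt px - Real.sqrt p0x) ^ 2 := by
  rcases hp.eq_or_lt with h | h
  · have hp00 : p0x = 0 := le_antisymm (by rw [← h] at hr; simpa using hr) hp0
    rw [← h, hp00]; simp
  · set M := Real.exp (D / 2) with hM_def
    have hM : 1 ≤ M := Real.one_le_exp (by linarith)
    have hM2 : M ^ 2 = Real.exp D := by
      rw [sq, ← Real.exp_add]; norm_num
    set a := p0x / px with ha_def
    have ha : 0 ≤ a := div_nonneg hp0 h.le
    have haM : a ≤ M ^ 2 := by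
      rw [hM2, ha_def, div_le_iff₀ h]
      linarith [hr]
    have hp0eq : p0x = a * px := by
      rw [ha_def]; field_simp
    have h1 : Real.sqrt p0x = Real.sqrt a * Real.sqrt px := by
      rw [hp0eq, Real.sqrt_mul ha]
    have e1 : Real.sqrt px * Real.sqrt px = px := Real.mul_self_sqrt h.le
    have key : px * (Real.sqrt a - 1) ^ 2 = (Real.sqrt px - Real.sqrt p0x) ^ 2 := by
      rw [h1]
      linear_combination (-(Real.sqrt a - 1) ^ 2) * e1
    have kl := aux_kl M a hM ha haM
    have kl0 := aux_nonneg a ha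
    have sq' := aux_sq M a hM ha haM
    refine ⟨?_, ?_, ?_⟩
    · have := mul_le_mul_of_nonneg_left kl0 h.le
      calc (0:ℝ) = px * 0 := by ring
        _ ≤ px * (a * Real.log a - a + 1) := this
        _ = Real.log (p0x / px) * p0x - p0x + px := by
            rw [← ha_def, hp0eq]; ring
    · have h2 := mul_le_mul_of_nonneg_left kl h.le
      calc Real.log (p0x / px) * p0x - p0x + px
          = px * (a * Real.log a - a + 1) := by rw [← ha_def, hp0eq]; ring
        _ ≤ px * (4 * M ^ 2 * (Real.sqrt a - 1) ^ 2) := h2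
        _ = 4 * M ^ 2 * (px * (Real.sqrt a - 1) ^ 2) := by ring
        _ = 4 * Real.exp D * (Real.sqrt px - Real.sqrt p0x) ^ 2 := by rw [key, hM2]
    · have h2 := mul_le_mul_of_nonneg_left sq' h.le
      calc (Real.log (p0x / px)) ^ 2 * p0x
          = px * (a * (Real.log a) ^ 2) := by rw [← ha_def, hp0eq]; ring
        _ ≤ px * (4 * M ^ 2 * (Real.sqrt a - 1) ^ 2) := h2
        _ = 4 * M ^ 2 * (px * (Real.sqrt a - 1) ^ 2) := by ring
        _ = 4 * Real.exp D * (Real.sqrt px - Real.sqrt p0x) ^ 2 := by rw [key, hM2]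

/-- If the likelihood ratio `p₀/p` is uniformly bounded by `e^D`, then the
Kullback–Leibler divergence and its second moment are bounded by a constant
(depending only on `D`) times the squared Hellinger distance. -/
theorem stmt10 {X : Type*} [MeasurableSpace X] (D : ℝ) (hD : 0 ≤ D) :
    ∃ B : ℝ, 0 < B ∧
      ∀ (μ : Measure X), SigmaFinite μ →
      ∀ (p p0 : X → ℝ), (∀ x, 0 ≤ p x) → (∀ x, 0 ≤ p0 x) →
        Measurable p → Measurable p0 →
        (∫ x, p x ∂μ) = 1 → (∫ x, p0 x ∂μ) = 1 →
        (∀ x, p0 x ≤ Real.exp D * p x) →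
        (∫ x, Real.log (p0 x / p x) * p0 x ∂μ)
            ≤ B^2 * ∫ x, (Real.sqrt (p x) - Real.sqrt (p0 x))^2 ∂μ ∧
        (∫ x, (Real.log (p0 x / p x))^2 * p0 x ∂μ)
            ≤ B^2 * ∫ x, (Real.sqrt (p x) - Real.sqrt (p0 x))^2 ∂μ := by
  refine ⟨2 * Real.exp (D / 2), by positivity, ?_⟩
  intro μ _ p p0 hp hp0 hpm hp0m hp1 hp01 hr
  have hE : Real.exp (D / 2) ^ 2 = Real.exp D := by
    rw [sq, ← Real.exp_add]; norm_num
  have hB2 : (2 * Real.exp (D / 2)) ^ 2 = 4 * Real.exp D := by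
    rw [mul_pow, hE]; norm_num
  -- integrability of p and p0
  have hpint : Integrable p μ := by
    by_contra hcon
    rw [integral_undef hcon] at hp1
    exact one_ne_zero hp1.symm
  have hp0int : Integrable p0 μ := by
    by_contra hcon
    rw [integral_undef hcon] at hp01
    exact one_ne_zero hp01.symm
  -- squared Hellinger integrand
  set H : X → ℝ := fun x => (Real.sqrt (p x) - Real.sqrt (p0 x)) ^ 2 with hH_def
  have hHmeas : Measurable H :=
    ((Real.continuous_sqrt.measurable.comp hpm).sub
      (Real.continuous_sqrt.measurable.comp hp0m)).pow_const 2
  have hHint : Integrable H μ := by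
    refine Integrable.mono' ((hpint.add hp0int).const_mul 2)
      hHmeas.aestronglyMeasurable (ae_of_all _ fun x => ?_)
    rw [Real.norm_eq_abs, abs_of_nonneg (sq_nonneg _)]
    have e1 : Real.sqrt (p x) * Real.sqrt (p x) = p x := Real.mul_self_sqrt (hp x)
    have e2 : Real.sqrt (p0 x) * Real.sqrt (p0 x) = p0 x := Real.mul_self_sqrt (hp0 x)
    have h3 : 0 ≤ Real.sqrt (p x) * Real.sqrt (p0 x) := by positivity
    simp only [hH_def, Pi.add_apply]
    nlinarith
  have hHCint : Integrable (fun x => 4 * Real.exp D * H x) μ := hHint.const_mul _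
  -- pointwise bounds
  have hpw := fun x => pointwise_bounds D (p x) (p0 x) hD (hp x) (hp0 x) (hr x)
  -- the nonnegative KL integrand
  set g : X → ℝ := fun x => Real.log (p0 x / p x) * p0 x - p0 x + p x with hg_def
  have hgmeas : Measurable g :=
    (((Real.measurable_log.comp (hp0m.div hpm)).mul hp0m).sub hp0m).add hpm
  have hgint : Integrable g μ := by
    refine Integrable.mono' hHCint hgmeas.aestronglyMeasurable (ae_of_all _ fun x => ?_)
    rw [Real.norm_eq_abs, abs_of_nonneg (hpw x).1]
    exact (hpw x).2.1
  -- first bound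
  have e : (fun x => Real.log (p0 x / p x) * p0 x) = fun x => g x + (p0 x - p x) := by
    funext x; simp only [hg_def]; ring
  have hgle : ∫ x, g x ∂μ ≤ ∫ x, 4 * Real.exp D * H x ∂μ :=
    integral_mono hgint hHCint fun x => (hpw x).2.1
  have hsubint : Integrable (fun x => p0 x - p x) μ := hp0int.sub hpint
  have hfirst : (∫ x, Real.log (p0 x / p x) * p0 x ∂μ) = ∫ x, g x ∂μ := by
    rw [e, integral_add hgint hsubint, integral_sub hp0int hpint, hp01, hp1]
    ring
  have hHval : ∫ x, 4 * Real.exp D * H x ∂μ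
      = (2 * Real.exp (D / 2)) ^ 2 * ∫ x, H x ∂μ := by
    rw [integral_const_mul, hB2]
  constructor
  · calc (∫ x, Real.log (p0 x / p x) * p0 x ∂μ) = ∫ x, g x ∂μ := hfirst
      _ ≤ ∫ x, 4 * Real.exp D * H x ∂μ := hgle
      _ = (2 * Real.exp (D / 2)) ^ 2 * ∫ x, H x ∂μ := hHval
  · have h2meas : Measurable fun x => (Real.log (p0 x / p x)) ^ 2 * p0 x :=
      ((Real.measurable_log.comp (hp0m.div hpm)).pow_const 2).mul hp0m
    have h2int : Integrable (fun x => (Real.log (p0 x / p x)) ^ 2 * p0 x) μ := by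
      refine Integrable.mono' hHCint h2meas.aestronglyMeasurable (ae_of_all _ fun x => ?_)
      rw [Real.norm_eq_abs, abs_of_nonneg (mul_nonneg (sq_nonneg _) (hp0 x))]
      exact (hpw x).2.2
    calc (∫ x, (Real.log (p0 x / p x)) ^ 2 * p0 x ∂μ)
        ≤ ∫ x, 4 * Real.exp D * H x ∂μ :=
          integral_mono h2int hHCint fun x => (hpw x).2.2
      _ = (2 * Real.exp (D / 2)) ^ 2 * ∫ x, H x ∂μ := hHval
end
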